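/- arXiv:2201.11300 — 5 statements merged into one kernel-verified Lean document; each statement's English description precedes it below -/
import Mathlib

section
/- Let {Φ_k}_{k∈K} (K a finite index set) be a partition of X into nonempty subsets, and let f satisfy ε_k-differential privacy on each Φ_k with ε_k ≥ 0. Let E_m > 0 and suppose that E'(Φ_k) ≥ e^{ε_k}·E_m for every k. Then for every observed pseudo-location x' ∈ X with Σ_{y∈X} π(y)f(x'|y) > 0, the conditional expected inference error satisfies ExpEr(x') ≥ E_m. -/
/-!
Split the posterior error along the partition. On a block Φ, ε-DP makes every likelihood
f(x'|x), x ∈ Φ, at least t := (Σ_{y∈Φ} π(y) f(x'|y)) / (e^ε Σ_{y∈Φ} π(y)). Hence the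
block's contribution Σ_{x∈Φ} π(x) f(x'|x) d(x̂,x) is at least t · Σ_{x∈Φ} π(x) d(x̂,x)
≥ t · e^ε E_m Σ_{y∈Φ} π(y) = E_m Σ_{y∈Φ} π(y) f(x'|y). Summing over the blocks and dividing
by the total mass Σ_y π(y) f(x'|y) gives ExpEr(x') ≥ E_m.
-/

open Finset Real

lemma Finset.sum_div_mul_eq_sum_mul_div {ι : Type*} (s : Finset ι) (w g : ι → ℝ) (W : ℝ) :
    ∑ x ∈ s, (w x / W) * g x = (∑ x ∈ s, w x * g x) / W := by
  rw [Finset.sum_div]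
  exact Finset.sum_congr rfl fun x _ => by ring

lemma Finset.sum_eq_sum_sum_of_partition {ι K : Type*} [Fintype ι] [Fintype K]
    (Φ : K → Finset ι) (hdisj : ∀ k l, k ≠ l → Disjoint (Φ k) (Φ l))
    (hcov : ∀ x, ∃ k, x ∈ Φ k) (g : ι → ℝ) :
    ∑ x, g x = ∑ k, ∑ x ∈ Φ k, g x := by
  classical
  have huniv : (univ : Finset ι) = univ.biUnion Φ := by
    ext x
    simpa using hcov x
  rw [huniv, Finset.sum_biUnion fun k _ l _ hkl => hdisj k l hkl]

lemma mul_sum_mul_le_sum_mul_mul_of_ratio_le {ι : Type*} (s : Finset ι) (w p g : ι → ℝ)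
    (hw : ∀ x ∈ s, 0 ≤ w x) (hp : ∀ x ∈ s, 0 ≤ p x) (hg : ∀ x ∈ s, 0 ≤ g x)
    {L E : ℝ} (hL : 0 < L) (hratio : ∀ x ∈ s, ∀ y ∈ s, p y ≤ L * p x)
    (hE : L * E ≤ ∑ x ∈ s, (w x / ∑ y ∈ s, w y) * g x) :
    E * ∑ y ∈ s, w y * p y ≤ ∑ x ∈ s, w x * p x * g x := by
  set W := ∑ y ∈ s, w y
  set D := ∑ y ∈ s, w y * p y
  rcases (Finset.sum_nonneg hw : 0 ≤ W).eq_or_lt with hW | hW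
  · have hw0 : ∀ y ∈ s, w y = 0 := (Finset.sum_eq_zero_iff_of_nonneg hw).mp hW.symm
    have hD : D = 0 := Finset.sum_eq_zero fun y hy => by rw [hw0 y hy, zero_mul]
    rw [hD, mul_zero]
    exact Finset.sum_nonneg fun x hx => mul_nonneg (mul_nonneg (hw x hx) (hp x hx)) (hg x hx)
  have hE' : L * E * W ≤ ∑ x ∈ s, w x * g x := by
    rwa [Finset.sum_div_mul_eq_sum_mul_div, le_div_iff₀ hW] at hE
  have ht : 0 ≤ D / (L * W) :=
    div_nonneg (Finset.sum_nonneg fun y hy => mul_nonneg (hw y hy) (hp y hy)) (by positivity)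
  have ht_le : ∀ x ∈ s, D / (L * W) ≤ p x := fun x hx => by
    rw [div_le_iff₀ (by positivity)]
    calc D ≤ ∑ y ∈ s, w y * (L * p x) :=
          Finset.sum_le_sum fun y hy => mul_le_mul_of_nonneg_left (hratio x hx y hy) (hw y hy)
      _ = p x * (L * W) := by rw [← Finset.sum_mul]; ring
  calc E * D = D / (L * W) * (L * E * W) := by
        rw [div_mul_eq_mul_div, eq_div_iff (mul_pos hL hW).ne']; ring
    _ ≤ D / (L * W) * ∑ x ∈ s, w x * g x := mul_le_mul_of_nonneg_left hE' ht
    _ = ∑ x ∈ s, D / (L * W) * (w x * g x) := Finset.mul_sum _ _ _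
    _ ≤ ∑ x ∈ s, p x * (w x * g x) := Finset.sum_le_sum fun x hx =>
          mul_le_mul_of_nonneg_right (ht_le x hx) (mul_nonneg (hw x hx) (hg x hx))
    _ = ∑ x ∈ s, w x * p x * g x := Finset.sum_congr rfl fun x _ => by ring

theorem stmt_0_general {X : Type*} [Fintype X] [Nonempty X] [MetricSpace X]
    (pr : X → ℝ) (hprpos : ∀ x, 0 < pr x)
    (f : X → X → ℝ) (hf0 : ∀ x x', 0 ≤ f x x')
    {K : Type*} [Fintype K] (Φ : K → Finset X)
    (hdisj : ∀ k l, k ≠ l → Disjoint (Φ k) (Φ l))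
    (hcov : ∀ x : X, ∃ k, x ∈ Φ k)
    (ε : K → ℝ)
    (hDP : ∀ k, ∀ x ∈ Φ k, ∀ y ∈ Φ k, ∀ x' : X, f x x' ≤ Real.exp (ε k) * f y x')
    (Em : ℝ)
    (hbound : ∀ k,
      Real.exp (ε k) * Em ≤
        univ.inf' univ_nonempty
          (fun xhat => ∑ x ∈ Φ k, (pr x / ∑ y ∈ Φ k, pr y) * dist xhat x))
    (x' : X) (hden : 0 < ∑ y, pr y * f y x') :
    Em ≤
      univ.inf' univ_nonempty
        (fun xhat => ∑ x, (pr x * f x x' / ∑ y, pr y * f y x') * dist xhat x) := by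
  refine Finset.le_inf' _ _ fun xhat _ => ?_
  have hsplit := Finset.sum_eq_sum_sum_of_partition Φ hdisj hcov
  rw [Finset.sum_div_mul_eq_sum_mul_div, le_div_iff₀ hden, hsplit, hsplit, Finset.mul_sum]
  refine Finset.sum_le_sum fun k _ => ?_
  exact mul_sum_mul_le_sum_mul_mul_of_ratio_le (Φ k) pr (fun y => f y x') (dist xhat)
    (fun x _ => (hprpos x).le) (fun x _ => hf0 x x') (fun x _ => dist_nonneg) (exp_pos (ε k))
    (fun x hx y hy => hDP k y hy x hx x') ((hbound k).trans (Finset.inf'_le _ (mem_univ xhat)))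

/-- If {Φ_k} is a partition of X, f satisfies ε_k-DP on each Φ_k,
E_m > 0 and E'(Φ_k) ≥ e^{ε_k}·E_m for every k, then for every observed x' with
positive denominator, ExpEr(x') ≥ E_m. -/
theorem stmt_0 {X : Type*} [Fintype X] [Nonempty X] [MetricSpace X]
    (pr : X → ℝ) (hprpos : ∀ x, 0 < pr x) (hprsum : ∑ x, pr x = 1)
    (f : X → X → ℝ) (hf0 : ∀ x x', 0 ≤ f x x') (hf1 : ∀ x, ∑ x', f x x' = 1)
    {K : Type*} [Fintype K] (Φ : K → Finset X)
    (hne : ∀ k, (Φ k).Nonempty)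
    (hdisj : ∀ k l, k ≠ l → Disjoint (Φ k) (Φ l))
    (hcov : ∀ x : X, ∃ k, x ∈ Φ k)
    (ε : K → ℝ) (hε : ∀ k, 0 ≤ ε k)
    (hDP : ∀ k, ∀ x ∈ Φ k, ∀ y ∈ Φ k, ∀ x' : X, f x x' ≤ Real.exp (ε k) * f y x')
    (Em : ℝ) (hEm : 0 < Em)
    (hbound : ∀ k,
      Real.exp (ε k) * Em ≤
        univ.inf' univ_nonempty
          (fun xhat => ∑ x ∈ Φ k, (pr x / ∑ y ∈ Φ k, pr y) * dist xhat x))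
    (x' : X) (hden : 0 < ∑ y, pr y * f y x') :
    Em ≤
      univ.inf' univ_nonempty
        (fun xhat => ∑ x, (pr x * f x x' / ∑ y, pr y * f y x') * dist xhat x) :=
  stmt_0_general pr hprpos f hf0 Φ hdisj hcov ε hDP Em hbound x' hden
end

section
/- Let {Φ_k}_{k∈K} (K a finite index set) be a partition of X into nonempty subsets and let f satisfy ε_k-differential privacy on each Φ_k with ε_k ≥ 0. Then for every observed pseudo-location x' ∈ X with Σ_{y∈X} π(y)f(x'|y) > 0, ExpEr(x') ≥ Σ_{k∈K} Pr(Φ_k|x')·e^{−ε_k}·E'(Φ_k), where Pr(Φ_k|x') = Σ_{x∈Φ_k} Pr(x|x'). -/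
open Finset Real

/-!
On a cell `Φ` on which `f` is `ε`-DP, every likelihood `f y x'` with `y ∈ Φ` is at most
`exp ε * f x x'`, so the posterior mass of `Φ` is at most `exp ε * π(Φ) * f x x' / D`, where
`D = ∑ y, π y * f y x'`. Hence the posterior `Pr(·|x')` dominates, pointwise on `Φ`, the prior
conditioned on `Φ` scaled by `Pr(Φ|x') * exp (-ε)`. Evaluating at the Bayes estimate `x̂` of
`ExpEr(x')`, the error restricted to `Φ` is therefore at least `Pr(Φ|x') * exp (-ε) * E'(Φ)`;
summing over the disjoint cells gives the bound.
-/

theorem Finset.sum_sum_le_sum_of_pairwise_disjoint {ι α : Type*} [Fintype α]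
    (s : Finset ι) (Φ : ι → Finset α) (hΦ : ∀ k l, k ≠ l → Disjoint (Φ k) (Φ l))
    {g : α → ℝ} (hg : ∀ x, 0 ≤ g x) :
    ∑ k ∈ s, ∑ x ∈ Φ k, g x ≤ ∑ x, g x := by
  classical
  rw [← sum_biUnion fun k _ l _ hkl => hΦ k l hkl]
  exact sum_le_univ_sum_of_nonneg hg

theorem sum_mul_mul_exp_neg_mul_div_le_of_le_exp_mul {α : Type*} {s : Finset α}
    {w p : α → ℝ} {ε : ℝ} {x : α} (hx : x ∈ s) (hw : ∀ y ∈ s, 0 < w y)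
    (hp : ∀ y ∈ s, p y ≤ exp ε * p x) :
    (∑ y ∈ s, w y * p y) * exp (-ε) * (w x / ∑ y ∈ s, w y) ≤ w x * p x := by
  have hW : 0 < ∑ y ∈ s, w y :=
    (hw x hx).trans_le (single_le_sum (fun y hy => (hw y hy).le) hx)
  have hmass : ∑ y ∈ s, w y * p y ≤ exp ε * (∑ y ∈ s, w y) * p x := by
    rw [mul_comm (exp ε), sum_mul, sum_mul]
    exact sum_le_sum fun y hy => by
      rw [mul_assoc]
      exact mul_le_mul_of_nonneg_left (hp y hy) (hw y hy).le
  calc (∑ y ∈ s, w y * p y) * exp (-ε) * (w x / ∑ y ∈ s, w y)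
      ≤ exp ε * (∑ y ∈ s, w y) * p x * exp (-ε) * (w x / ∑ y ∈ s, w y) := by
        gcongr
        exact div_nonneg (hw x hx).le hW.le
    _ = w x * p x := by
        rw [exp_neg]
        field_simp

theorem sum_div_mul_exp_neg_mul_inf'_le_of_le_exp_mul {α : Type*} [Fintype α] [Nonempty α]
    [PseudoMetricSpace α] {s : Finset α} {w p : α → ℝ} {ε D : ℝ} (hD : 0 ≤ D)
    (hw : ∀ y ∈ s, 0 < w y) (hp0 : ∀ y ∈ s, 0 ≤ p y)
    (hp : ∀ x ∈ s, ∀ y ∈ s, p y ≤ exp ε * p x) (xhat : α) :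
    (∑ x ∈ s, w x * p x / D) * exp (-ε) *
        univ.inf' univ_nonempty (fun z => ∑ x ∈ s, (w x / ∑ y ∈ s, w y) * dist z x) ≤
      ∑ x ∈ s, (w x * p x / D) * dist xhat x := by
  have hcoef : 0 ≤ (∑ x ∈ s, w x * p x / D) * exp (-ε) :=
    mul_nonneg (sum_nonneg fun x hx => div_nonneg (mul_nonneg (hw x hx).le (hp0 x hx)) hD)
      (exp_pos _).le
  calc (∑ x ∈ s, w x * p x / D) * exp (-ε) *
        univ.inf' univ_nonempty (fun z => ∑ x ∈ s, (w x / ∑ y ∈ s, w y) * dist z x)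
      ≤ (∑ x ∈ s, w x * p x / D) * exp (-ε) *
          ∑ x ∈ s, (w x / ∑ y ∈ s, w y) * dist xhat x :=
        mul_le_mul_of_nonneg_left (inf'_le _ (mem_univ xhat)) hcoef
    _ = ∑ x ∈ s, ((∑ y ∈ s, w y * p y) * exp (-ε) * (w x / ∑ y ∈ s, w y)) / D *
          dist xhat x := by
        rw [← sum_div, mul_sum]
        exact sum_congr rfl fun x _ => by ring
    _ ≤ ∑ x ∈ s, (w x * p x / D) * dist xhat x :=
        sum_le_sum fun x hx => mul_le_mul_of_nonneg_right
          (div_le_div_of_nonneg_right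
            (sum_mul_mul_exp_neg_mul_div_le_of_le_exp_mul hx hw (hp x hx)) hD)
          dist_nonneg

theorem stmt_2_general {X : Type*} [Fintype X] [Nonempty X] [MetricSpace X]
    (pr : X → ℝ) (hprpos : ∀ x, 0 < pr x)
    (f : X → X → ℝ) (hf0 : ∀ x x', 0 ≤ f x x')
    {K : Type*} [Fintype K] (Φ : K → Finset X)
    (hdisj : ∀ k l, k ≠ l → Disjoint (Φ k) (Φ l))
    (ε : K → ℝ)
    (hDP : ∀ k, ∀ x ∈ Φ k, ∀ y ∈ Φ k, ∀ x' : X, f x x' ≤ Real.exp (ε k) * f y x')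
    (x' : X) :
    ∑ k, (∑ x ∈ Φ k, pr x * f x x' / ∑ y, pr y * f y x') * Real.exp (-(ε k)) *
        (univ.inf' univ_nonempty
          (fun xhat => ∑ x ∈ Φ k, (pr x / ∑ y ∈ Φ k, pr y) * dist xhat x)) ≤
      univ.inf' univ_nonempty
        (fun xhat => ∑ x, (pr x * f x x' / ∑ y, pr y * f y x') * dist xhat x) := by
  have hD : 0 ≤ ∑ y, pr y * f y x' :=
    sum_nonneg fun y _ => mul_nonneg (hprpos y).le (hf0 y x')
  refine le_inf' _ _ fun xhat _ => ?_
  calc _ ≤ ∑ k, ∑ x ∈ Φ k, (pr x * f x x' / ∑ y, pr y * f y x') * dist xhat x :=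
        sum_le_sum fun k _ => sum_div_mul_exp_neg_mul_inf'_le_of_le_exp_mul hD
          (fun y _ => hprpos y) (fun y _ => hf0 y x') (fun x hx y hy => hDP k y hy x hx x') xhat
    _ ≤ _ := sum_sum_le_sum_of_pairwise_disjoint _ Φ hdisj fun x =>
        mul_nonneg (div_nonneg (mul_nonneg (hprpos x).le (hf0 x x')) hD) dist_nonneg

/-- If {Φ_k} is a partition of X and f satisfies ε_k-DP on each Φ_k,
then for every observed x' with positive denominator,
ExpEr(x') ≥ Σ_k Pr(Φ_k|x')·e^{−ε_k}·E'(Φ_k). -/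
theorem stmt_2 {X : Type*} [Fintype X] [Nonempty X] [MetricSpace X]
    (pr : X → ℝ) (hprpos : ∀ x, 0 < pr x) (hprsum : ∑ x, pr x = 1)
    (f : X → X → ℝ) (hf0 : ∀ x x', 0 ≤ f x x') (hf1 : ∀ x, ∑ x', f x x' = 1)
    {K : Type*} [Fintype K] (Φ : K → Finset X)
    (hne : ∀ k, (Φ k).Nonempty)
    (hdisj : ∀ k l, k ≠ l → Disjoint (Φ k) (Φ l))
    (hcov : ∀ x : X, ∃ k, x ∈ Φ k)
    (ε : K → ℝ) (hε : ∀ k, 0 ≤ ε k)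
    (hDP : ∀ k, ∀ x ∈ Φ k, ∀ y ∈ Φ k, ∀ x' : X, f x x' ≤ Real.exp (ε k) * f y x')
    (x' : X) (hden : 0 < ∑ y, pr y * f y x') :
    ∑ k, (∑ x ∈ Φ k, pr x * f x x' / ∑ y, pr y * f y x') * Real.exp (-(ε k)) *
        (univ.inf' univ_nonempty
          (fun xhat => ∑ x ∈ Φ k, (pr x / ∑ y ∈ Φ k, pr y) * dist xhat x)) ≤
      univ.inf' univ_nonempty
        (fun xhat => ∑ x, (pr x * f x x' / ∑ y, pr y * f y x') * dist xhat x) :=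
  stmt_2_general pr hprpos f hf0 Φ hdisj ε hDP x'
end

section
/- Let Φ ⊆ X be a nonempty subset, ε ≥ 0, and suppose f satisfies ε-differential privacy on Φ, i.e., f(x'|x) ≤ e^{ε}·f(x'|y) for all x, y ∈ Φ and all x' ∈ X. Then for every pseudo-location x' ∈ X with Σ_{y∈Φ} π(y)f(x'|y) > 0 and every candidate estimate x̂ ∈ X, it holds that Σ_{x∈Φ} π(x)f(x'|x)·d(x̂,x) / Σ_{y∈Φ} π(y)f(x'|y) ≥ e^{−ε} · Σ_{x∈Φ} π(x)·d(x̂,x) / Σ_{y∈Φ} π(y); consequently min_{x̂∈X} Σ_{x∈Φ} π(x)f(x'|x)·d(x̂,x) / Σ_{y∈Φ} π(y)f(x'|y) ≥ e^{−ε}·E'(Φ). -/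
open Finset Real

/-- If f satisfies ε-DP on a nonempty Φ ⊆ X, then for every x' with
Σ_{y∈Φ} pr(y)f(x'|y) > 0 and every candidate estimate x̂,
Σ_{x∈Φ} pr(x)f(x'|x)d(x̂,x) / Σ_{y∈Φ} pr(y)f(x'|y) ≥ e^{−ε}·Σ_{x∈Φ} pr(x)d(x̂,x) / Σ_{y∈Φ} pr(y);
consequently the min over x̂ of the left-hand side is at least e^{−ε}·E'(Φ). -/
theorem stmt_3 {X : Type*} [Fintype X] [Nonempty X] [MetricSpace X]
    (pr : X → ℝ) (hprpos : ∀ x, 0 < pr x) (hprsum : ∑ x, pr x = 1)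
    (f : X → X → ℝ) (hf0 : ∀ x x', 0 ≤ f x x') (hf1 : ∀ x, ∑ x', f x x' = 1)
    (Φ : Finset X) (hΦ : Φ.Nonempty)
    (ε : ℝ) (hε : 0 ≤ ε)
    (hDP : ∀ x ∈ Φ, ∀ y ∈ Φ, ∀ x' : X, f x x' ≤ Real.exp ε * f y x')
    (x' : X) (hden : 0 < ∑ y ∈ Φ, pr y * f y x') :
    (∀ xhat : X,
      Real.exp (-ε) * ((∑ x ∈ Φ, pr x * dist xhat x) / (∑ y ∈ Φ, pr y)) ≤
        (∑ x ∈ Φ, pr x * f x x' * dist xhat x) / (∑ y ∈ Φ, pr y * f y x')) ∧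
    Real.exp (-ε) *
        (univ.inf' univ_nonempty
          (fun xhat => ∑ x ∈ Φ, (pr x / ∑ y ∈ Φ, pr y) * dist xhat x)) ≤
      univ.inf' univ_nonempty
        (fun xhat =>
          (∑ x ∈ Φ, pr x * f x x' * dist xhat x) / (∑ y ∈ Φ, pr y * f y x')) := by
  have hA : (0:ℝ) < ∑ y ∈ Φ, pr y := Finset.sum_pos (fun y _ => hprpos y) hΦ
  have key : ∀ xhat : X,
      Real.exp (-ε) * ((∑ x ∈ Φ, pr x * dist xhat x) / (∑ y ∈ Φ, pr y)) ≤
        (∑ x ∈ Φ, pr x * f x x' * dist xhat x) / (∑ y ∈ Φ, pr y * f y x') := by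
    intro xhat
    rw [mul_div_assoc', div_le_div_iff₀ hA hden]
    rw [mul_assoc, Finset.sum_mul_sum, Finset.sum_mul_sum, Finset.mul_sum]
    refine Finset.sum_le_sum (fun x hx => ?_)
    rw [Finset.mul_sum]
    refine Finset.sum_le_sum (fun y hy => ?_)
    have hdp := hDP y hy x hx x'
    have h1 : Real.exp (-ε) * f y x' ≤ f x x' := by
      rw [Real.exp_neg]
      rw [inv_mul_le_iff₀ (Real.exp_pos ε)]
      exact hdp
    have h2 : (0:ℝ) ≤ pr x * dist xhat x * pr y := mul_nonneg (mul_nonneg (hprpos x).le dist_nonneg) (hprpos y).le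
    calc Real.exp (-ε) * (pr x * dist xhat x * (pr y * f y x'))
        = (pr x * dist xhat x * pr y) * (Real.exp (-ε) * f y x') := by ring
      _ ≤ (pr x * dist xhat x * pr y) * f x x' := by
          exact mul_le_mul_of_nonneg_left h1 h2
      _ = pr x * f x x' * dist xhat x * pr y := by ring
  refine ⟨key, ?_⟩
  refine Finset.le_inf' _ _ (fun xhat _ => ?_)
  have h3 : (∑ x ∈ Φ, (pr x / ∑ y ∈ Φ, pr y) * dist xhat x)
      = (∑ x ∈ Φ, pr x * dist xhat x) / (∑ y ∈ Φ, pr y) := by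
    rw [Finset.sum_div]
    exact Finset.sum_congr rfl (fun x _ => by ring)
  calc Real.exp (-ε) * (univ.inf' univ_nonempty
        (fun xhat => ∑ x ∈ Φ, (pr x / ∑ y ∈ Φ, pr y) * dist xhat x))
      ≤ Real.exp (-ε) * (∑ x ∈ Φ, (pr x / ∑ y ∈ Φ, pr y) * dist xhat x) := by
        exact mul_le_mul_of_nonneg_left
          (Finset.inf'_le _ (Finset.mem_univ xhat)) (Real.exp_pos _).le
    _ = Real.exp (-ε) * ((∑ x ∈ Φ, pr x * dist xhat x) / (∑ y ∈ Φ, pr y)) := by rw [h3]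
    _ ≤ _ := key xhat
end

section
/- Let Φ ⊆ X be a nonempty subset with diameter D(Φ) = max_{u,v∈Φ} d(u,v) > 0, let Y ⊆ X be a nonempty reporting range, let ε ≥ 0, and define the exponential mechanism f(x'|x) = exp(−ε·d(x,x')/(2D(Φ))) / Σ_{t∈Y} exp(−ε·d(x,t)/(2D(Φ))) for x ∈ Φ and x' ∈ Y. Then f is (ε_g, D(Φ))-geo-indistinguishable within Φ with ε_g = ε/(2D(Φ)): for all x, y ∈ Φ and all x' ∈ Y, f(x'|x)/f(x'|y) ≤ exp(ε_g·(d(x,y) + D(Φ))). -/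
open Finset Real

/-!
By the triangle inequality each weight `exp (-c d(x,t))` of the exponential mechanism changes by a
factor at most `exp (c d(x,y))` when `x` is replaced by `y`. This bounds both the ratio of the
numerators and the ratio of the normalising sums, so the ratio of output probabilities is at most
`exp (2 c d(x,y))`, and `d(x,y) ≤ D` on `Φ`.
-/

section ExpMechanism

variable {X : Type*} [PseudoMetricSpace X]

/-- `expMechanism c Y x x'` is the paper's `f(x'|x)` with `c = ε / (2 D(Φ))`. -/
noncomputable def expMechanism (c : ℝ) (Y : Finset X) (x x' : X) : ℝ :=
  exp (-(c * dist x x')) / ∑ t ∈ Y, exp (-(c * dist x t))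

lemma exp_neg_mul_dist_le {c : ℝ} (hc : 0 ≤ c) (x y z : X) :
    exp (-(c * dist x z)) ≤ exp (c * dist x y) * exp (-(c * dist y z)) := by
  rw [← exp_add, exp_le_exp]
  nlinarith [dist_triangle_left y z x]

lemma sum_exp_neg_mul_dist_le {c : ℝ} (hc : 0 ≤ c) (Y : Finset X) (x y : X) :
    ∑ t ∈ Y, exp (-(c * dist x t)) ≤ exp (c * dist x y) * ∑ t ∈ Y, exp (-(c * dist y t)) := by
  rw [mul_sum]
  exact sum_le_sum fun t _ => exp_neg_mul_dist_le hc x y t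

lemma sum_exp_neg_mul_dist_pos (c : ℝ) {Y : Finset X} (hY : Y.Nonempty) (x : X) :
    0 < ∑ t ∈ Y, exp (-(c * dist x t)) :=
  sum_pos (fun _ _ => exp_pos _) hY

lemma expMechanism_div_le {c : ℝ} (hc : 0 ≤ c) {Y : Finset X} {x' : X} (hx' : x' ∈ Y) (x y : X) :
    expMechanism c Y x x' / expMechanism c Y y x' ≤ exp (2 * c * dist x y) := by
  have hSx := sum_exp_neg_mul_dist_pos c ⟨x', hx'⟩ x
  have hSy := sum_exp_neg_mul_dist_pos c ⟨x', hx'⟩ y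
  have hweight := exp_neg_mul_dist_le hc x y x'
  have hsum := sum_exp_neg_mul_dist_le hc Y y x
  rw [dist_comm y x] at hsum
  have hy' := exp_pos (-(c * dist y x'))
  unfold expMechanism
  rw [div_div_div_eq, div_le_iff₀ (by positivity),
    show 2 * c * dist x y = c * dist x y + c * dist x y by ring, exp_add]
  calc exp (-(c * dist x x')) * ∑ t ∈ Y, exp (-(c * dist y t))
      ≤ (exp (c * dist x y) * exp (-(c * dist y x'))) *
          (exp (c * dist x y) * ∑ t ∈ Y, exp (-(c * dist x t))) :=
        mul_le_mul hweight hsum hSy.le (by positivity)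
    _ = _ := by ring

end ExpMechanism

theorem stmt_8_general {X : Type*} [MetricSpace X]
    (Φ : Finset X)
    (D : ℝ)
    (hDub : ∀ u ∈ Φ, ∀ v ∈ Φ, dist u v ≤ D)
    (Y : Finset X)
    (ε : ℝ) (hε : 0 ≤ ε) :
    ∀ x ∈ Φ, ∀ y ∈ Φ, ∀ x' ∈ Y,
      (Real.exp (-(ε * dist x x') / (2 * D)) /
          ∑ t ∈ Y, Real.exp (-(ε * dist x t) / (2 * D))) /
        (Real.exp (-(ε * dist y x') / (2 * D)) /
          ∑ t ∈ Y, Real.exp (-(ε * dist y t) / (2 * D))) ≤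
      Real.exp ((ε / (2 * D)) * (dist x y + D)) := by
  intro x hx y hy x' hx'
  have hxy : dist x y ≤ D := hDub x hx y hy
  have hD : 0 ≤ D := (dist_self x).symm.le.trans (hDub x hx x hx)
  have hc : 0 ≤ ε / (2 * D) := by positivity
  have hrate : ∀ u v : X, -(ε * dist u v) / (2 * D) = -(ε / (2 * D) * dist u v) := fun _ _ => by
    ring
  simp only [hrate]
  calc _ ≤ exp (2 * (ε / (2 * D)) * dist x y) := expMechanism_div_le hc hx' x y
    _ ≤ exp (ε / (2 * D) * (dist x y + D)) := by
        rw [exp_le_exp]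
        nlinarith

/-- Let Φ be a nonempty subset of X with diameter D > 0, Y a nonempty
reporting range, ε ≥ 0, and let f be the exponential mechanism
f(x'|x) = exp(−ε·d(x,x')/(2D)) / Σ_{t∈Y} exp(−ε·d(x,t)/(2D)). Then f is
(ε_g, D)-geo-indistinguishable within Φ with ε_g = ε/(2D):
f(x'|x)/f(x'|y) ≤ exp(ε_g·(d(x,y) + D)) for x, y ∈ Φ, x' ∈ Y. -/
theorem stmt_8 {X : Type*} [Fintype X] [Nonempty X] [MetricSpace X]
    (Φ : Finset X) (hΦ : Φ.Nonempty)
    (D : ℝ) (hDpos : 0 < D)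
    (hDub : ∀ u ∈ Φ, ∀ v ∈ Φ, dist u v ≤ D)
    (hDmem : ∃ u ∈ Φ, ∃ v ∈ Φ, dist u v = D)
    (Y : Finset X) (hY : Y.Nonempty)
    (ε : ℝ) (hε : 0 ≤ ε) :
    ∀ x ∈ Φ, ∀ y ∈ Φ, ∀ x' ∈ Y,
      (Real.exp (-(ε * dist x x') / (2 * D)) /
          ∑ t ∈ Y, Real.exp (-(ε * dist x t) / (2 * D))) /
        (Real.exp (-(ε * dist y x') / (2 * D)) /
          ∑ t ∈ Y, Real.exp (-(ε * dist y t) / (2 * D))) ≤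
      Real.exp ((ε / (2 * D)) * (dist x y + D)) :=
  stmt_8_general Φ D hDub Y ε hε
end

section
/- Let Φ_i and Φ_j be disjoint nonempty subsets of X with diameters D(Φ_i) > 0 and D(Φ_j) > 0, with nonempty finite reporting ranges Y_i and Y_j respectively whose intersection Y_i ∩ Y_j is nonempty, and let 0 ≤ ε_i ≤ ε_0 and 0 ≤ ε_j ≤ ε_0. Define the exponential mechanism f(x'|x) = exp(−ε_i·d(x,x')/(2D(Φ_i))) / Σ_{s∈Y_i} exp(−ε_i·d(x,s)/(2D(Φ_i))) for x ∈ Φ_i, x' ∈ Y_i, and f(x'|y) = exp(−ε_j·d(y,x')/(2D(Φ_j))) / Σ_{t∈Y_j} exp(−ε_j·d(y,t)/(2D(Φ_j))) for y ∈ Φ_j, x' ∈ Y_j. Then for all x ∈ Φ_i, y ∈ Φ_j and x' ∈ Y_i ∩ Y_j, f(x'|x)/f(x'|y) ≤ (|Y_j|/|Y_i|) · exp((ε_0/2)·(D(Y_j)/D(Φ_j) + D(Y_i)/D(Φ_i))), where |Y| denotes the cardinality and D(Y) the diameter of Y. -/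
open Finset Real

/-! By the triangle inequality, the score `-ε d(x, s) / (2D)` of a report `s ∈ Y` differs from
that of `x' ∈ Y` by at most `ε D(Y) / (2D)`. Hence the mechanism's probability of `x'` lies between
`exp (∓ ε D(Y) / (2D)) / |Y|`, and dividing the upper bound for `f(x'|x)` by the lower bound for
`f(x'|y)` gives the claim. -/

section Softmax

variable {ι : Type*} {Y : Finset ι} {g : ι → ℝ} {a : ι} {c : ℝ}

theorem exp_div_sum_exp_le (hY : Y.Nonempty) (h : ∀ s ∈ Y, g a - c ≤ g s) :
    exp (g a) / ∑ s ∈ Y, exp (g s) ≤ exp c / #Y := by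
  have hsum : #Y * (exp (g a) / exp c) ≤ ∑ s ∈ Y, exp (g s) := by
    rw [← exp_sub]
    simpa [nsmul_eq_mul] using card_nsmul_le_sum Y _ _ fun s hs => exp_le_exp.mpr (h s hs)
  calc exp (g a) / ∑ s ∈ Y, exp (g s)
      ≤ exp (g a) / (#Y * (exp (g a) / exp c)) := by gcongr
    _ = exp c / #Y := by field_simp

theorem exp_neg_div_card_le_exp_div_sum_exp (hY : Y.Nonempty) (h : ∀ s ∈ Y, g s ≤ g a + c) :
    exp (-c) / #Y ≤ exp (g a) / ∑ s ∈ Y, exp (g s) := by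
  have hsum : ∑ s ∈ Y, exp (g s) ≤ #Y * exp (g a + c) := by
    simpa [nsmul_eq_mul] using sum_le_card_nsmul Y _ _ fun s hs => exp_le_exp.mpr (h s hs)
  calc exp (-c) / #Y = exp (g a) / (#Y * exp (g a + c)) := by
        rw [exp_add, exp_neg]
        field_simp
    _ ≤ exp (g a) / ∑ s ∈ Y, exp (g s) := by gcongr

end Softmax

section ExponentialMechanism

variable {X : Type*} [PseudoMetricSpace X]

/-- The log-weight of reporting `x'` for the true location `x` in the exponential mechanism
with budget `ε` on a protection set of diameter `D`. -/
noncomputable def expMechScore (ε D : ℝ) (x x' : X) : ℝ := -(ε * dist x x') / (2 * D)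

theorem abs_expMechScore_sub_le {ε D : ℝ} (hε : 0 ≤ ε) (hD : 0 ≤ D) (x a s : X) :
    |expMechScore ε D x s - expMechScore ε D x a| ≤ ε * dist a s / (2 * D) := by
  rw [expMechScore, expMechScore, ← sub_div, abs_div, abs_of_nonneg (by positivity : (0:ℝ) ≤ 2 * D),
    neg_sub_neg, ← mul_sub, abs_mul, abs_of_nonneg hε]
  gcongr
  rw [dist_comm x a, dist_comm x s]
  exact abs_dist_sub_le a s x

theorem abs_expMechScore_sub_le_of_mem {ε ε₀ D DY : ℝ} {Y : Finset X} (hε : 0 ≤ ε)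
    (hεε₀ : ε ≤ ε₀) (hD : 0 ≤ D) (hY : ∀ u ∈ Y, ∀ v ∈ Y, dist u v ≤ DY) (x : X) {a s : X}
    (ha : a ∈ Y) (hs : s ∈ Y) :
    |expMechScore ε D x s - expMechScore ε D x a| ≤ ε₀ * DY / (2 * D) := by
  refine (abs_expMechScore_sub_le hε hD x a s).trans ?_
  gcongr
  exacts [hε.trans hεε₀, hY a ha s hs]

end ExponentialMechanism

theorem stmt_10_general {X : Type*} [DecidableEq X] [MetricSpace X]
    (Φi Φj : Finset X)
    (Di Dj : ℝ) (hDipos : 0 < Di) (hDjpos : 0 < Dj)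
    (Yi Yj : Finset X)
    (DYi DYj : ℝ)
    (hDYiub : ∀ u ∈ Yi, ∀ v ∈ Yi, dist u v ≤ DYi)
    (hDYjub : ∀ u ∈ Yj, ∀ v ∈ Yj, dist u v ≤ DYj)
    (εi εj ε₀ : ℝ) (hεi : 0 ≤ εi) (hεiε₀ : εi ≤ ε₀) (hεj : 0 ≤ εj) (hεjε₀ : εj ≤ ε₀) :
    ∀ x ∈ Φi, ∀ y ∈ Φj, ∀ x' ∈ Yi ∩ Yj,
      (Real.exp (-(εi * dist x x') / (2 * Di)) /
          ∑ s ∈ Yi, Real.exp (-(εi * dist x s) / (2 * Di))) /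
        (Real.exp (-(εj * dist y x') / (2 * Dj)) /
          ∑ t ∈ Yj, Real.exp (-(εj * dist y t) / (2 * Dj))) ≤
      ((Yj.card : ℝ) / (Yi.card : ℝ)) *
        Real.exp ((ε₀ / 2) * (DYj / Dj + DYi / Di)) := by
  intro x _ y _ x' hx'
  obtain ⟨hx'i, hx'j⟩ := mem_inter.mp hx'
  have hnum := exp_div_sum_exp_le (g := expMechScore εi Di x) ⟨x', hx'i⟩ fun s hs =>
    sub_le_of_abs_sub_le_left <|
      abs_expMechScore_sub_le_of_mem hεi hεiε₀ hDipos.le hDYiub x hx'i hs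
  have hden := exp_neg_div_card_le_exp_div_sum_exp (g := expMechScore εj Dj y) ⟨x', hx'j⟩
    fun t ht => sub_le_iff_le_add'.mp (abs_sub_le_iff.mp <|
      abs_expMechScore_sub_le_of_mem hεj hεjε₀ hDjpos.le hDYjub y hx'j ht).1
  calc _ ≤ (exp (ε₀ * DYi / (2 * Di)) / #Yi) / (exp (-(ε₀ * DYj / (2 * Dj))) / #Yj) :=
        div_le_div₀ (by positivity) hnum
          (div_pos (exp_pos _) (by exact_mod_cast card_pos.mpr ⟨x', hx'j⟩)) hden
    _ = _ := by
        rw [show ε₀ / 2 * (DYj / Dj + DYi / Di) = ε₀ * DYj / (2 * Dj) + ε₀ * DYi / (2 * Di) by ring,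
          exp_add, exp_neg]
        field_simp

/-- Let Φ_i, Φ_j be disjoint nonempty subsets of X with positive
diameters D_i, D_j and nonempty finite reporting ranges Y_i, Y_j whose intersection is
nonempty, and let 0 ≤ ε_i ≤ ε_0, 0 ≤ ε_j ≤ ε_0. For the exponential mechanisms on
Φ_i (with Y_i, ε_i) and Φ_j (with Y_j, ε_j), for all x ∈ Φ_i, y ∈ Φ_j, x' ∈ Y_i ∩ Y_j,
f(x'|x)/f(x'|y) ≤ (|Y_j|/|Y_i|)·exp((ε_0/2)·(D(Y_j)/D_j + D(Y_i)/D_i)). -/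
theorem stmt_10 {X : Type*} [Fintype X] [DecidableEq X] [Nonempty X] [MetricSpace X]
    (Φi Φj : Finset X) (hΦi : Φi.Nonempty) (hΦj : Φj.Nonempty)
    (hdisj : Disjoint Φi Φj)
    (Di Dj : ℝ) (hDipos : 0 < Di) (hDjpos : 0 < Dj)
    (hDiub : ∀ u ∈ Φi, ∀ v ∈ Φi, dist u v ≤ Di)
    (hDimem : ∃ u ∈ Φi, ∃ v ∈ Φi, dist u v = Di)
    (hDjub : ∀ u ∈ Φj, ∀ v ∈ Φj, dist u v ≤ Dj)
    (hDjmem : ∃ u ∈ Φj, ∃ v ∈ Φj, dist u v = Dj)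
    (Yi Yj : Finset X) (hYi : Yi.Nonempty) (hYj : Yj.Nonempty)
    (hYij : (Yi ∩ Yj).Nonempty)
    (DYi DYj : ℝ)
    (hDYiub : ∀ u ∈ Yi, ∀ v ∈ Yi, dist u v ≤ DYi)
    (hDYimem : ∃ u ∈ Yi, ∃ v ∈ Yi, dist u v = DYi)
    (hDYjub : ∀ u ∈ Yj, ∀ v ∈ Yj, dist u v ≤ DYj)
    (hDYjmem : ∃ u ∈ Yj, ∃ v ∈ Yj, dist u v = DYj)
    (εi εj ε₀ : ℝ) (hεi : 0 ≤ εi) (hεiε₀ : εi ≤ ε₀) (hεj : 0 ≤ εj) (hεjε₀ : εj ≤ ε₀) :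
    ∀ x ∈ Φi, ∀ y ∈ Φj, ∀ x' ∈ Yi ∩ Yj,
      (Real.exp (-(εi * dist x x') / (2 * Di)) /
          ∑ s ∈ Yi, Real.exp (-(εi * dist x s) / (2 * Di))) /
        (Real.exp (-(εj * dist y x') / (2 * Dj)) /
          ∑ t ∈ Yj, Real.exp (-(εj * dist y t) / (2 * Dj))) ≤
      ((Yj.card : ℝ) / (Yi.card : ℝ)) *
        Real.exp ((ε₀ / 2) * (DYj / Dj + DYi / Di)) :=
  stmt_10_general Φi Φj Di Dj hDipos hDjpos Yi Yj DYi DYj hDYiub hDYjub εi εj ε₀ hεi hεiε₀ hεj hεjε₀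
end
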